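/- Let I = ⟨g₁, …, g_l⟩ be the ideal of R_S generated by finitely many elements g₁, …, g_l. Then C(Ī) ⊆ Γ₊(I). -/

import Mathlib

open scoped BigOperators

noncomputable section

namespace ToricNewton

/-- The submonoid `S ⊆ ℤⁿ` generated by `b₁, …, b_r`. -/
def Sgroup {n r : ℕ} (b : Fin r → Fin n → ℤ) : AddSubmonoid (Fin n → ℤ) :=
  AddSubmonoid.closure (Set.range b)

/-- View an exponent `d ∈ ℕⁿ` as a point of `ℤⁿ`. -/
def expToZ {n : ℕ} (d : Fin n →₀ ℕ) : Fin n → ℤ := fun i => (d i : ℤ)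

lemma expToZ_zero {n : ℕ} : expToZ (0 : Fin n →₀ ℕ) = 0 := by
  funext i; simp [expToZ]

lemma expToZ_add {n : ℕ} (d e : Fin n →₀ ℕ) : expToZ (d + e) = expToZ d + expToZ e := by
  funext i; simp [expToZ]

/-- `R_S`: the subalgebra of `ℂ[[x₁,…,xₙ]]` of series with support in `S`;
this is the algebraic model of the local ring `𝒪_{X(S)}` at the origin. -/
def RS {n r : ℕ} (b : Fin r → Fin n → ℤ) : Subalgebra ℂ (MvPowerSeries (Fin n) ℂ) where
  carrier := { f | ∀ d : Fin n →₀ ℕ, MvPowerSeries.coeff d f ≠ 0 → expToZ d ∈ Sgroup b }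
  add_mem' := by
    intro f g hf hg d hd
    rw [Set.mem_setOf_eq] at hf hg
    rw [map_add] at hd
    by_cases h1 : MvPowerSeries.coeff d f ≠ 0
    · exact hf d h1
    · push_neg at h1
      exact hg d (by simpa [h1] using hd)
  zero_mem' := by intro d hd; simp at hd
  one_mem' := by
    intro d hd
    rw [MvPowerSeries.coeff_one] at hd
    split_ifs at hd with h
    · subst h; simpa [expToZ_zero] using (Sgroup b).zero_mem
    · exact absurd rfl hd
  mul_mem' := by
    intro f g hf hg d hd
    rw [Set.mem_setOf_eq] at hf hg
    rw [MvPowerSeries.coeff_mul] at hd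
    obtain ⟨p, hp, hne⟩ := Finset.exists_ne_zero_of_sum_ne_zero hd
    rw [Finset.HasAntidiagonal.mem_antidiagonal] at hp
    have h1 : MvPowerSeries.coeff p.1 f ≠ 0 := left_ne_zero_of_mul hne
    have h2 : MvPowerSeries.coeff p.2 g ≠ 0 := right_ne_zero_of_mul hne
    have := (Sgroup b).add_mem (hf _ h1) (hg _ h2)
    rwa [← expToZ_add, hp] at this
  algebraMap_mem' := by
    intro c d hd
    rw [MvPowerSeries.algebraMap_apply, MvPowerSeries.coeff_C] at hd
    split_ifs at hd with h
    · subst h; simpa [expToZ_zero] using (Sgroup b).zero_mem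
    · exact absurd rfl hd

/-- The exponent in `ℕⁿ` associated to `s ∈ ℤⁿ` (with nonnegative entries). -/
def natExp {n : ℕ} (s : Fin n → ℤ) : Fin n →₀ ℕ :=
  Finsupp.equivFunOnFinite.symm fun i => (s i).toNat

/-- The monomial power series `x^s` with coefficient `1`. -/
def monomialZ {n : ℕ} (s : Fin n → ℤ) : MvPowerSeries (Fin n) ℂ :=
  MvPowerSeries.monomial (natExp s) 1

/-- View a lattice point as a point of `ℝⁿ`. -/
def toReal {n : ℕ} (k : Fin n → ℤ) : Fin n → ℝ := fun i => (k i : ℝ)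

/-- The standard pairing on `ℝⁿ`. -/
def dotR {n : ℕ} (x v : Fin n → ℝ) : ℝ := ∑ i, x i * v i

/-- The cone of `S`, i.e. nonnegative real combinations of `b₁, …, b_r`. -/
def coneS {n r : ℕ} (b : Fin r → Fin n → ℤ) : Set (Fin n → ℝ) :=
  { x | ∃ lam : Fin r → ℝ, (∀ i, 0 ≤ lam i) ∧ x = ∑ i, lam i • toReal (b i) }

/-- The dual cone of `cone(S)`. -/
def dualConeS {n r : ℕ} (b : Fin r → Fin n → ℤ) : Set (Fin n → ℝ) :=
  { u | ∀ v ∈ coneS b, 0 ≤ dotR u v }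

/-- The Newton polyhedron `Γ₊(A)` of `A ⊆ S`: the convex hull of
`{k + v : k ∈ A, v ∈ cone(S)}`. -/
def NewtonPoly {n r : ℕ} (b : Fin r → Fin n → ℤ) (A : Set (Fin n → ℤ)) :
    Set (Fin n → ℝ) :=
  convexHull ℝ { x | ∃ k ∈ A, ∃ v ∈ coneS b, x = toReal k + v }

/-- `ℓ(v, P) = inf {⟨k, v⟩ : k ∈ P}`. -/
def ellP {n : ℕ} (P : Set (Fin n → ℝ)) (v : Fin n → ℝ) : ℝ :=
  sInf ((fun k => dotR k v) '' P)

/-- `Δ(v, P) = {k ∈ P : ⟨k, v⟩ = ℓ(v, P)}`. -/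
def faceP {n : ℕ} (P : Set (Fin n → ℝ)) (v : Fin n → ℝ) : Set (Fin n → ℝ) :=
  { k ∈ P | dotR k v = ellP P v }

/-- The support of a power series, as a subset of `ℤⁿ`. -/
def suppZ {n : ℕ} (g : MvPowerSeries (Fin n) ℂ) : Set (Fin n → ℤ) :=
  { s | ∃ d : Fin n →₀ ℕ, MvPowerSeries.coeff d g ≠ 0 ∧ s = expToZ d }

/-- The Newton polyhedron `Γ₊(I)` of an ideal `I ⊆ R_S`. -/
def NewtonIdeal {n r : ℕ} (b : Fin r → Fin n → ℤ) (I : Ideal ↥(RS b)) :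
    Set (Fin n → ℝ) :=
  NewtonPoly b (⋃ g ∈ (I : Set ↥(RS b)), suppZ (g : MvPowerSeries (Fin n) ℂ))

/-- `h` is integral over the ideal `I`:
`h^m + a₁ h^(m-1) + ⋯ + a_m = 0` with `aᵢ ∈ Iⁱ`. -/
def IsIntegralOverIdeal {R : Type*} [CommRing R] (I : Ideal R) (h : R) : Prop :=
  ∃ m : ℕ, 0 < m ∧ ∃ a : Fin m → R, (∀ i : Fin m, a i ∈ I ^ ((i : ℕ) + 1)) ∧
    h ^ m + ∑ i : Fin m, a i * h ^ (m - 1 - (i : ℕ)) = 0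

/-- `I°`: the ideal generated by the monomials `x^k` with `k ∈ S ∩ Γ₊(I)`. -/
def Icirc {n r : ℕ} (b : Fin r → Fin n → ℤ) (I : Ideal ↥(RS b)) : Ideal ↥(RS b) :=
  Ideal.span { m : ↥(RS b) | ∃ s : Fin n → ℤ, s ∈ Sgroup b ∧
    toReal s ∈ NewtonIdeal b I ∧ (m : MvPowerSeries (Fin n) ℂ) = monomialZ s }

/-- `C(Ī)`: the convex hull of the exponents of the monomials in the integral closure. -/
def CIbar {n r : ℕ} (b : Fin r → Fin n → ℤ) (I : Ideal ↥(RS b)) : Set (Fin n → ℝ) :=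
  convexHull ℝ (toReal '' { s : Fin n → ℤ | s ∈ Sgroup b ∧
    ∃ m : ↥(RS b), (m : MvPowerSeries (Fin n) ℂ) = monomialZ s ∧ IsIntegralOverIdeal I m })

/-- The coefficient of `g` at a lattice exponent `v`. -/
def coeffZ {n : ℕ} (g : MvPowerSeries (Fin n) ℂ) (v : Fin n → ℤ) : ℂ :=
  MvPowerSeries.coeff (natExp v) g

/-- `L(g_Δ)` evaluated at `z`: the polynomial `∑_{v ∈ supp(g) ∩ Δ} a_v z^v`. -/
def Lface {n : ℕ} (g : MvPowerSeries (Fin n) ℂ) (Δ : Set (Fin n → ℝ))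
    (z : Fin n → ℂ) : ℂ :=
  ∑ᶠ v ∈ { v : Fin n → ℤ | v ∈ suppZ g ∧ toReal v ∈ Δ },
    coeffZ g v * ∏ i, z i ^ (v i)

/-- `Δ` is a (nonempty) compact face of the polyhedron `P`. -/
def IsCompactFace {n r : ℕ} (b : Fin r → Fin n → ℤ) (P Δ : Set (Fin n → ℝ)) : Prop :=
  (∃ v ∈ dualConeS b, Δ = faceP P v) ∧ Δ.Nonempty ∧ IsCompact Δ

/-- A finite generating family of `I` is non-degenerate if on every compact face `Δ`
of `Γ₊(I)` the polynomials `L((gⱼ)_Δ)` have no common zero in the torus `(ℂ*)ⁿ`. -/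
def NondegenFamily {n r : ℕ} (b : Fin r → Fin n → ℤ) {l : ℕ}
    (g : Fin l → ↥(RS b)) (I : Ideal ↥(RS b)) : Prop :=
  ∀ Δ : Set (Fin n → ℝ), IsCompactFace b (NewtonIdeal b I) Δ →
    ¬ ∃ z : Fin n → ℂ, (∀ i, z i ≠ 0) ∧
      ∀ j, Lface (g j : MvPowerSeries (Fin n) ℂ) Δ z = 0

/-- An ideal is non-degenerate if it admits a non-degenerate finite generating family. -/
def Nondegenerate {n r : ℕ} (b : Fin r → Fin n → ℤ) (I : Ideal ↥(RS b)) : Prop :=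
  ∃ l : ℕ, ∃ g : Fin l → ↥(RS b), Ideal.span (Set.range g) = I ∧ NondegenFamily b g I

/-- The toric ideal `I_S ⊆ ℂ[x₁,…,x_r]`, generated by the binomials
`x^{α₊} - x^{α₋}` over the relations `α` of `b₁, …, b_r`. -/
def toricIdeal {n r : ℕ} (b : Fin r → Fin n → ℤ) : Ideal (MvPolynomial (Fin r) ℂ) :=
  Ideal.span { p | ∃ α : Fin r → ℤ, (∑ i, α i • b i) = 0 ∧
    p = (∏ i, MvPolynomial.X i ^ (α i).toNat) - ∏ i, MvPolynomial.X i ^ (-(α i)).toNat }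

/-- The affine toric variety `X(S) = V(I_S) ⊆ ℂ^r`. -/
def XS {n r : ℕ} (b : Fin r → Fin n → ℤ) : Set (Fin r → ℂ) :=
  { x | ∀ p ∈ toricIdeal b, MvPolynomial.eval x p = 0 }

/-!
If `x^s` is integral over `I`, say `h^m + a₁ h^(m-1) + ⋯ + a_m = 0` with `h = x^s` and
`aᵢ ∈ Iⁱ`, then comparing coefficients of `x^(m s)` shows that `i s` lies in the support of
some `aᵢ`. An exponent in the support of a product of `i` elements of `I` is a sum of `i`
exponents from supports of elements of `I`, so `s` is their barycentre and lies in `Γ₊(I)`;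
convexity of `Γ₊(I)` then absorbs the convex hull `C(Ī)`.
-/

section PowerSeries

variable {σ R : Type*} [CommRing R]

open MvPowerSeries

lemma exists_sum_eq_of_coeff_ne_zero_of_mem_pow {A : Subalgebra R (MvPowerSeries σ R)}
    {I : Ideal A} (k : ℕ) {f : A} (hf : f ∈ I ^ (k + 1)) {d : σ →₀ ℕ}
    (hd : coeff d (f : MvPowerSeries σ R) ≠ 0) :
    ∃ e : Fin (k + 1) → σ →₀ ℕ,
      (∀ j, ∃ g ∈ I, coeff (e j) (g : MvPowerSeries σ R) ≠ 0) ∧ d = ∑ j, e j := by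
  classical
  induction k generalizing f d with
  | zero =>
    rw [zero_add, pow_one] at hf
    exact ⟨fun _ => d, fun _ => ⟨f, hf, hd⟩, by simp⟩
  | succ k ih =>
    rw [pow_succ] at hf
    induction hf using Submodule.mul_induction_on' generalizing d with
    | mem_mul_mem x hx y hy =>
      rw [MulMemClass.coe_mul, coeff_mul] at hd
      obtain ⟨p, hp, hne⟩ := Finset.exists_ne_zero_of_sum_ne_zero hd
      obtain ⟨e, he, hsum⟩ := ih hx (left_ne_zero_of_mul hne)
      refine ⟨Fin.cons p.2 e, Fin.cases ⟨y, hy, right_ne_zero_of_mul hne⟩ he, ?_⟩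
      rw [Fin.sum_cons, ← hsum, add_comm, Finset.HasAntidiagonal.mem_antidiagonal.mp hp]
    | add x _ y _ hx hy =>
      rw [AddMemClass.coe_add, map_add] at hd
      by_cases hxd : coeff d (x : MvPowerSeries σ R) = 0
      · exact hy (by simpa [hxd] using hd)
      · exact hx hxd

lemma exists_coeff_ne_zero_of_monomial_integral [Nontrivial R] {D : σ →₀ ℕ} {m : ℕ}
    (a : Fin m → MvPowerSeries σ R)
    (h : monomial D 1 ^ m + ∑ i : Fin m, a i * monomial D 1 ^ (m - 1 - (i : ℕ)) = 0) :
    ∃ i : Fin m, coeff (((i : ℕ) + 1) • D) (a i) ≠ 0 := by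
  have hterm (i : Fin m) : coeff (m • D) (a i * monomial D 1 ^ (m - 1 - (i : ℕ))) =
      coeff (((i : ℕ) + 1) • D) (a i) := by
    rw [monomial_pow, one_pow, show m • D = ((i : ℕ) + 1) • D + (m - 1 - (i : ℕ)) • D by
      rw [← add_smul]; congr 1; omega, coeff_add_mul_monomial, mul_one]
  have hcoeff := congrArg (coeff (m • D)) h
  rw [map_add, map_sum, map_zero, monomial_pow, one_pow, coeff_monomial_same] at hcoeff
  simp only [hterm] at hcoeff
  by_contra! hzero
  simp [hzero] at hcoeff

end PowerSeries

lemma mem_convexHull_of_card_nsmul_eq_sum {𝕜 E ι : Type*} [Field 𝕜] [LinearOrder 𝕜]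
    [IsStrictOrderedRing 𝕜] [AddCommGroup E] [Module 𝕜 E] [Fintype ι] [Nonempty ι]
    {s : Set E} {p : ι → E} (hp : ∀ i, p i ∈ s) {x : E}
    (hx : Fintype.card ι • x = ∑ i, p i) : x ∈ convexHull 𝕜 s := by
  have hcard : (Fintype.card ι : 𝕜) ≠ 0 := Nat.cast_ne_zero.mpr Fintype.card_ne_zero
  have hx' : x = ∑ i, (Fintype.card ι : 𝕜)⁻¹ • p i := by
    rw [← Finset.smul_sum, ← hx, ← Nat.cast_smul_eq_nsmul 𝕜, smul_smul, inv_mul_cancel₀ hcard,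
      one_smul]
  rw [hx']
  refine (convex_convexHull 𝕜 s).sum_mem (fun _ _ => by positivity) ?_
    (fun i _ => subset_convexHull 𝕜 s (hp i))
  rw [Finset.sum_const, Finset.card_univ, nsmul_eq_mul, mul_inv_cancel₀ hcard]

section Toric

variable {n r : ℕ} {b : Fin r → Fin n → ℤ}

lemma nonneg_of_mem_Sgroup (hb : ∀ i j, 0 ≤ b i j) {s : Fin n → ℤ} (hs : s ∈ Sgroup b) :
    ∀ j, 0 ≤ s j := by
  induction hs using AddSubmonoid.closure_induction with
  | mem x hx => obtain ⟨i, rfl⟩ := hx; exact hb i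
  | zero => exact fun _ => le_rfl
  | add x y _ _ hx hy => exact fun j => add_nonneg (hx j) (hy j)

lemma expToZ_natExp {s : Fin n → ℤ} (hs : ∀ j, 0 ≤ s j) : expToZ (natExp s) = s := by
  funext j
  simp [expToZ, natExp, Int.toNat_of_nonneg (hs j)]

lemma zero_mem_coneS : (0 : Fin n → ℝ) ∈ coneS b :=
  ⟨0, fun _ => le_rfl, by simp⟩

def expToRealHom : (Fin n →₀ ℕ) →+ (Fin n → ℝ) where
  toFun d := toReal (expToZ d)
  map_zero' := by funext j; simp [toReal, expToZ]
  map_add' d e := by funext j; simp [toReal, expToZ]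

end Toric

open MvPowerSeries in
theorem cIbar_subset_newton_general
    (n r : ℕ) (b : Fin r → Fin n → ℤ) (hb_nonneg : ∀ i j, 0 ≤ b i j) (I : Ideal ↥(RS b)) :
    CIbar b I ⊆ NewtonIdeal b I := by
  refine convexHull_min ?_ (convex_convexHull ℝ _)
  rintro _ ⟨s, ⟨hsS, h, hh, m, -, a, haI, heq⟩, rfl⟩
  have hrel : monomial (natExp s) 1 ^ m + ∑ i : Fin m,
      (a i : MvPowerSeries (Fin n) ℂ) * monomial (natExp s) 1 ^ (m - 1 - (i : ℕ)) = 0 := by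
    simpa [hh, monomialZ] using congrArg Subtype.val heq
  obtain ⟨i, hi⟩ := exists_coeff_ne_zero_of_monomial_integral _ hrel
  obtain ⟨e, he, hsum⟩ := exists_sum_eq_of_coeff_ne_zero_of_mem_pow i (haI i) hi
  rw [← expToZ_natExp (nonneg_of_mem_Sgroup hb_nonneg hsS)]
  refine mem_convexHull_of_card_nsmul_eq_sum (p := fun j => expToRealHom (e j)) (fun j => ?_) ?_
  · obtain ⟨g, hg, hne⟩ := he j
    exact ⟨expToZ (e j), Set.mem_biUnion hg ⟨e j, hne, rfl⟩, 0, zero_mem_coneS, (add_zero _).symm⟩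
  · rw [Fintype.card_fin]
    change ((i : ℕ) + 1) • expToRealHom (natExp s) = _
    rw [← map_nsmul, hsum, map_sum]

/-- for a finitely generated ideal `I = ⟨g₁, …, g_l⟩`,
`C(Ī) ⊆ Γ₊(I)`. -/
theorem cIbar_subset_newton
    (n r : ℕ) (hn : 1 ≤ n) (hr : 1 ≤ r) (b : Fin r → Fin n → ℤ)
    (hb_ne : ∀ i, b i ≠ 0) (hb_nonneg : ∀ i j, 0 ≤ b i j)
    (hb_gen : AddSubgroup.closure (Set.range b) = (⊤ : AddSubgroup (Fin n → ℤ)))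
    (hdim : Submodule.span ℝ (coneS b) = (⊤ : Submodule ℝ (Fin n → ℝ)))
    (hstrict : ∀ x ∈ coneS b, -x ∈ coneS b → x = (0 : Fin n → ℝ))
    (l : ℕ) (g : Fin l → ↥(RS b)) (I : Ideal ↥(RS b))
    (hI : I = Ideal.span (Set.range g)) :
    CIbar b I ⊆ NewtonIdeal b I :=
  cIbar_subset_newton_general n r b hb_nonneg I

end ToricNewton
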